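/- Let R be a nonempty closed subset of the nonnegative reals satisfying the 4-values condition and let G = (G; E, δ^G) be a connected, metric, regular R-graph. Let a, b ∈ G with a ≠ b and {a,b} ∉ E. Then the R-graph H = (G; E ∪ {{a,b}}, δ^H), obtained by adding the edge {a,b} with δ^H(a,b) = d^G(a,b) and keeping δ^H = δ^G on E, is a metric regular R-graph, and d^H(x,y) = d^G(x,y) for all pairs of distinct vertices x, y ∈ G. -/
import Mathlib


/-- For `a, b ∈ R`, `a ⊕ b := sup {x ∈ R | x ≤ a + b}`. -/
noncomputable def oplus (R : Set ℝ) (a b : ℝ) : ℝ :=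
  sSup {x | x ∈ R ∧ x ≤ a + b}

/-- A triple `(a,b,c)` is metric if each entry is at most the sum of the other two. -/
def IsMetricTriple (a b c : ℝ) : Prop :=
  a ≤ b + c ∧ b ≤ a + c ∧ c ≤ a + b

/-- The 4-values condition. -/
def FourValues (S : Set ℝ) : Prop :=
  ∀ a ∈ S, ∀ b ∈ S, ∀ c ∈ S, ∀ d ∈ S,
    max b (max c d) ≤ a → a ≤ b + c + d →
      ∀ x ∈ S, IsMetricTriple a b x → IsMetricTriple c d x →
        ∃ y ∈ S, IsMetricTriple a d y ∧ IsMetricTriple c b y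

/-- The `⊕`-sum `a₀ ⊕ (a₁ ⊕ (⋯ ⊕ aₙ))` of a list of reals. -/
noncomputable def oplusList (R : Set ℝ) : List ℝ → ℝ
  | [] => 0
  | [a] => a
  | a :: b :: l => oplus R a (oplusList R (b :: l))

/-- The `⊕`-length `δ(W)` of a walk `W`. -/
noncomputable def walkDelta (R : Set ℝ) {V : Type} {G : SimpleGraph V} (δ : V → V → ℝ)
    {a b : V} (w : G.Walk a b) : ℝ :=
  oplusList R (w.darts.map fun d => δ d.toProd.1 d.toProd.2)

/-- `d(a,b) = inf {δ(W) | W a walk from a to b}`. -/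
noncomputable def gdist (R : Set ℝ) {V : Type} (G : SimpleGraph V) (δ : V → V → ℝ)
    (a b : V) : ℝ :=
  sInf {x | ∃ w : G.Walk a b, x = walkDelta R δ w}

/-- An `R`-graph: a simple graph together with a symmetric edge-distance function
with values in `R` which is positive on edges. -/
def IsRGraph (R : Set ℝ) {V : Type} (G : SimpleGraph V) (δ : V → V → ℝ) : Prop :=
  ∀ x y : V, G.Adj x y → δ x y ∈ R ∧ 0 < δ x y ∧ δ x y = δ y x

/-- An `R`-graph is regular if `d(a,b) > 0` for all distinct `a`, `b`. -/
def RegularRGraph (R : Set ℝ) {V : Type} (G : SimpleGraph V) (δ : V → V → ℝ) : Prop :=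
  ∀ a b : V, a ≠ b → 0 < gdist R G δ a b

/-- An `R`-graph is metric if `δ(a,b) = d(a,b)` for every edge `{a,b}`. -/
def MetricRGraph (R : Set ℝ) {V : Type} (G : SimpleGraph V) (δ : V → V → ℝ) : Prop :=
  ∀ a b : V, G.Adj a b → δ a b = gdist R G δ a b


-- auxiliary lemmas
variable {R : Set ℝ}

lemma oplus_bddAbove (R : Set ℝ) (a b : ℝ) : BddAbove {x | x ∈ R ∧ x ≤ a + b} :=
  ⟨a + b, fun _ hx => hx.2⟩

lemma oplus_nonneg (hpos : ∀ x ∈ R, 0 ≤ x) (a b : ℝ) : 0 ≤ oplus R a b :=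
  Real.sSup_nonneg (fun x hx => hpos x hx.1)

lemma le_oplus {t a b : ℝ} (ht : t ∈ R) (h : t ≤ a + b) : t ≤ oplus R a b :=
  le_csSup (oplus_bddAbove R a b) ⟨ht, h⟩

lemma oplus_le_add {a b : ℝ} (ha : 0 ≤ a) (hb : 0 ≤ b) : oplus R a b ≤ a + b :=
  Real.sSup_le (fun _ hx => hx.2) (by linarith)

lemma oplus_mem (hcl : IsClosed R) (hpos : ∀ x ∈ R, 0 ≤ x) {a b : ℝ}
    (ha : a ∈ R) (hb : b ∈ R) : oplus R a b ∈ R := by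
  have hset : {x | x ∈ R ∧ x ≤ a + b} = R ∩ Set.Iic (a + b) := rfl
  have := (hcl.inter isClosed_Iic).csSup_mem
    (⟨a, ha, Set.mem_Iic.mpr (by linarith [hpos b hb])⟩ : (R ∩ Set.Iic (a + b)).Nonempty)
    ⟨a + b, fun _ hx => hx.2⟩
  rw [oplus, hset]
  exact this.1

lemma oplus_comm (R : Set ℝ) (a b : ℝ) : oplus R a b = oplus R b a := by
  unfold oplus; rw [add_comm]

lemma oplus_mono (hpos : ∀ x ∈ R, 0 ≤ x) {a b c d : ℝ} (h : a + b ≤ c + d) :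
    oplus R a b ≤ oplus R c d :=
  Real.sSup_le (fun _ hx => le_oplus hx.1 (hx.2.trans h)) (oplus_nonneg hpos c d)

lemma oplus_assoc_le (hcl : IsClosed R) (hpos : ∀ x ∈ R, 0 ≤ x) (h4 : FourValues R)
    {a b c : ℝ} (ha : a ∈ R) (hb : b ∈ R) (hc : c ∈ R) :
    oplus R a (oplus R b c) ≤ oplus R (oplus R a b) c := by
  set x := oplus R b c with hxdef
  have hxR : x ∈ R := oplus_mem hcl hpos hb hc
  have hxbc : x ≤ b + c := oplus_le_add (hpos b hb) (hpos c hc)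
  have hbx : b ≤ x := le_oplus hb (by linarith [hpos c hc])
  have hcx : c ≤ x := le_oplus hc (by linarith [hpos b hb])
  set u := oplus R a x with hudef
  have huR : u ∈ R := oplus_mem hcl hpos ha hxR
  have huax : u ≤ a + x := oplus_le_add (hpos a ha) (hpos x hxR)
  have hau : a ≤ u := le_oplus ha (by linarith [hpos x hxR])
  have hxu : x ≤ u := le_oplus hxR (by linarith [hpos a ha])
  refine le_oplus huR ?_
  by_contra h'
  push_neg at h'
  obtain ⟨y, hyR, hy1, hy2⟩ := h4 u huR a ha b hb c hc
    (by simp only [max_le_iff]; exact ⟨hau, hbx.trans hxu, hcx.trans hxu⟩)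
    (by linarith) x hxR
    ⟨huax, by linarith [hpos x hxR], by linarith [hpos a ha]⟩
    ⟨by linarith [hpos c hc], by linarith [hpos b hb], hxbc⟩
  have hyab : y ≤ oplus R a b := le_oplus hyR (by linarith [hy2.2.2])
  linarith [hy1.1]

lemma oplus_assoc (hcl : IsClosed R) (hpos : ∀ x ∈ R, 0 ≤ x) (h4 : FourValues R)
    {a b c : ℝ} (ha : a ∈ R) (hb : b ∈ R) (hc : c ∈ R) :
    oplus R (oplus R a b) c = oplus R a (oplus R b c) := by
  refine le_antisymm ?_ (oplus_assoc_le hcl hpos h4 ha hb hc)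
  calc oplus R (oplus R a b) c
      = oplus R c (oplus R b a) := by
        rw [oplus_comm R (oplus R a b) c, oplus_comm R a b]
    _ ≤ oplus R (oplus R c b) a := oplus_assoc_le hcl hpos h4 hc hb ha
    _ = oplus R a (oplus R b c) := by
        rw [oplus_comm R (oplus R c b) a, oplus_comm R c b]

lemma oplusList_cons (R : Set ℝ) (a : ℝ) {l : List ℝ} (hl : l ≠ []) :
    oplusList R (a :: l) = oplus R a (oplusList R l) := by
  cases l with
  | nil => exact absurd rfl hl
  | cons b t => rfl

lemma oplusList_nonneg (hpos : ∀ x ∈ R, 0 ≤ x) :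
    ∀ (l : List ℝ), (∀ x ∈ l, x ∈ R) → 0 ≤ oplusList R l
  | [], _ => le_refl 0
  | [a], hm => hpos a (hm a (by simp))
  | _ :: _ :: _, _ => oplus_nonneg hpos _ _

lemma oplusList_mem (hcl : IsClosed R) (hpos : ∀ x ∈ R, 0 ≤ x) :
    ∀ (l : List ℝ), l ≠ [] → (∀ x ∈ l, x ∈ R) → oplusList R l ∈ R
  | [], h, _ => absurd rfl h
  | [a], _, hm => hm a (by simp)
  | a :: b :: t, _, hm =>
      oplus_mem hcl hpos (hm a (by simp))
        (oplusList_mem hcl hpos (b :: t) (by simp)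
          (fun x hx => hm x (List.mem_cons_of_mem _ hx)))

lemma oplusList_append (hcl : IsClosed R) (hpos : ∀ x ∈ R, 0 ≤ x) (h4 : FourValues R) :
    ∀ (l₁ l₂ : List ℝ), l₁ ≠ [] → l₂ ≠ [] →
      (∀ x ∈ l₁, x ∈ R) → (∀ x ∈ l₂, x ∈ R) →
      oplusList R (l₁ ++ l₂) = oplus R (oplusList R l₁) (oplusList R l₂)
  | [], _, h, _, _, _ => absurd rfl h
  | [a], l₂, _, h₂, _, _ => by
      rw [List.singleton_append, oplusList_cons R a h₂]
      rfl
  | a :: b :: t, l₂, _, h₂, hm₁, hm₂ => by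
      show oplus R a (oplusList R ((b :: t) ++ l₂)) = _
      rw [oplusList_append hcl hpos h4 (b :: t) l₂ (by simp) h₂
            (fun x hx => hm₁ x (List.mem_cons_of_mem _ hx)) hm₂]
      exact (oplus_assoc hcl hpos h4 (hm₁ a (by simp))
        (oplusList_mem hcl hpos (b :: t) (by simp)
          (fun x hx => hm₁ x (List.mem_cons_of_mem _ hx)))
        (oplusList_mem hcl hpos l₂ h₂ hm₂)).symm

lemma oplusList_reverse (hcl : IsClosed R) (hpos : ∀ x ∈ R, 0 ≤ x) (h4 : FourValues R) :
    ∀ (l : List ℝ), (∀ x ∈ l, x ∈ R) → oplusList R l.reverse = oplusList R l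
  | [], _ => rfl
  | [a], _ => rfl
  | c :: b :: t, hm => by
      have hm' : ∀ x ∈ b :: t, x ∈ R := fun x hx => hm x (List.mem_cons_of_mem _ hx)
      have hcR : c ∈ R := hm c (by simp)
      rw [List.reverse_cons,
          oplusList_append hcl hpos h4 ((b :: t).reverse) [c] (by simp) (by simp)
            (fun x hx => hm' x (List.mem_reverse.mp hx))
            (fun x hx => by rw [List.mem_singleton.mp hx]; exact hcR),
          oplusList_reverse hcl hpos h4 (b :: t) hm']
      exact oplus_comm R _ c

section Walks

variable {V : Type} {G : SimpleGraph V} {δ : V → V → ℝ}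

open SimpleGraph

lemma darts_entries_mem (hRG : IsRGraph R G δ) {x y : V} (w : G.Walk x y) :
    ∀ v ∈ w.darts.map (fun d => δ d.toProd.1 d.toProd.2), v ∈ R := by
  intro v hv
  simp only [List.mem_map] at hv
  obtain ⟨d, _, rfl⟩ := hv
  exact (hRG _ _ d.adj).1

lemma walkDelta_nonneg (hpos : ∀ x ∈ R, 0 ≤ x) (hRG : IsRGraph R G δ) {x y : V}
    (w : G.Walk x y) : 0 ≤ walkDelta R δ w :=
  oplusList_nonneg hpos _ (darts_entries_mem hRG w)

lemma walkDelta_nil (x : V) : walkDelta R δ (Walk.nil : G.Walk x x) = 0 := rfl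

lemma walkDelta_mem (hcl : IsClosed R) (hpos : ∀ x ∈ R, 0 ≤ x) (hRG : IsRGraph R G δ)
    {x y : V} (hxy : x ≠ y) (w : G.Walk x y) : walkDelta R δ w ∈ R := by
  refine oplusList_mem hcl hpos _ ?_ (darts_entries_mem hRG w)
  intro h
  have hd : w.darts = [] := by
    cases h' : w.darts with
    | nil => rfl
    | cons d t => rw [h'] at h; simp at h
  have hlen : w.length = 0 := by rw [← SimpleGraph.Walk.length_darts, hd]; rfl
  exact hxy (SimpleGraph.Walk.eq_of_length_eq_zero hlen)

lemma gdist_bddBelow (hpos : ∀ x ∈ R, 0 ≤ x) (hRG : IsRGraph R G δ) (x y : V) :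
    BddBelow {t | ∃ w : G.Walk x y, t = walkDelta R δ w} := by
  refine ⟨0, ?_⟩
  rintro t ⟨w, rfl⟩
  exact walkDelta_nonneg hpos hRG w

lemma gdist_set_nonempty (hpc : G.Preconnected) (x y : V) :
    Set.Nonempty {t | ∃ w : G.Walk x y, t = walkDelta R δ w} :=
  (hpc x y).elim fun w => ⟨_, w, rfl⟩

lemma gdist_le_walkDelta (hpos : ∀ x ∈ R, 0 ≤ x) (hRG : IsRGraph R G δ) {x y : V}
    (w : G.Walk x y) : gdist R G δ x y ≤ walkDelta R δ w :=
  csInf_le (gdist_bddBelow hpos hRG x y) ⟨w, rfl⟩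

lemma gdist_nonneg (hpos : ∀ x ∈ R, 0 ≤ x) (hRG : IsRGraph R G δ) (x y : V) :
    0 ≤ gdist R G δ x y := by
  refine Real.sInf_nonneg ?_
  rintro t ⟨w, rfl⟩
  exact walkDelta_nonneg hpos hRG w

lemma gdist_mem (hcl : IsClosed R) (hpos : ∀ x ∈ R, 0 ≤ x) (hRG : IsRGraph R G δ)
    (hpc : G.Preconnected) {x y : V} (hxy : x ≠ y) : gdist R G δ x y ∈ R := by
  have hsub : {t | ∃ w : G.Walk x y, t = walkDelta R δ w} ⊆ R := by
    rintro t ⟨w, rfl⟩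
    exact walkDelta_mem hcl hpos hRG hxy w
  have h1 : gdist R G δ x y ∈ closure {t | ∃ w : G.Walk x y, t = walkDelta R δ w} :=
    csInf_mem_closure (gdist_set_nonempty hpc x y) (gdist_bddBelow hpos hRG x y)
  have := (closure_mono hsub) h1
  rwa [hcl.closure_eq] at this

lemma walkDelta_reverse (hcl : IsClosed R) (hpos : ∀ x ∈ R, 0 ≤ x) (h4 : FourValues R)
    (hRG : IsRGraph R G δ) {x y : V} (w : G.Walk x y) :
    walkDelta R δ w.reverse = walkDelta R δ w := by
  unfold walkDelta
  rw [SimpleGraph.Walk.darts_reverse, List.map_reverse, List.map_map]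
  have hmap : w.darts.map ((fun d => δ d.toProd.1 d.toProd.2) ∘ SimpleGraph.Dart.symm)
      = w.darts.map (fun d => δ d.toProd.1 d.toProd.2) := by
    refine List.map_congr_left fun d _ => ?_
    show δ d.toProd.2 d.toProd.1 = δ d.toProd.1 d.toProd.2
    exact ((hRG _ _ d.adj).2.2).symm
  rw [hmap, oplusList_reverse hcl hpos h4 _ (darts_entries_mem hRG w)]

lemma gdist_symm (hcl : IsClosed R) (hpos : ∀ x ∈ R, 0 ≤ x) (h4 : FourValues R)
    (hRG : IsRGraph R G δ) (x y : V) : gdist R G δ x y = gdist R G δ y x := by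
  unfold gdist
  congr 1
  ext t
  constructor
  · rintro ⟨w, rfl⟩
    exact ⟨w.reverse, (walkDelta_reverse hcl hpos h4 hRG w).symm⟩
  · rintro ⟨w, rfl⟩
    exact ⟨w.reverse, (walkDelta_reverse hcl hpos h4 hRG w).symm⟩

lemma oplusList_append_le (hcl : IsClosed R) (hpos : ∀ x ∈ R, 0 ≤ x) (h4 : FourValues R)
    (l₁ l₂ : List ℝ) (hm₁ : ∀ x ∈ l₁, x ∈ R) (hm₂ : ∀ x ∈ l₂, x ∈ R) :
    oplusList R (l₁ ++ l₂) ≤ oplusList R l₁ + oplusList R l₂ := by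
  rcases eq_or_ne l₁ [] with rfl | h₁
  · show oplusList R l₂ ≤ 0 + oplusList R l₂
    linarith
  rcases eq_or_ne l₂ [] with rfl | h₂
  · rw [List.append_nil]
    show oplusList R l₁ ≤ oplusList R l₁ + 0
    linarith
  rw [oplusList_append hcl hpos h4 l₁ l₂ h₁ h₂ hm₁ hm₂]
  exact oplus_le_add (oplusList_nonneg hpos l₁ hm₁) (oplusList_nonneg hpos l₂ hm₂)

lemma walkDelta_append_le (hcl : IsClosed R) (hpos : ∀ x ∈ R, 0 ≤ x) (h4 : FourValues R)
    (hRG : IsRGraph R G δ) {x z y : V} (w₁ : G.Walk x z) (w₂ : G.Walk z y) :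
    walkDelta R δ (w₁.append w₂) ≤ walkDelta R δ w₁ + walkDelta R δ w₂ := by
  unfold walkDelta
  rw [SimpleGraph.Walk.darts_append, List.map_append]
  exact oplusList_append_le hcl hpos h4 _ _ (darts_entries_mem hRG w₁) (darts_entries_mem hRG w₂)

lemma gdist_triangle (hcl : IsClosed R) (hpos : ∀ x ∈ R, 0 ≤ x) (h4 : FourValues R)
    (hRG : IsRGraph R G δ) (hpc : G.Preconnected) (x z y : V) :
    gdist R G δ x y ≤ oplus R (gdist R G δ x z) (gdist R G δ z y) := by
  by_cases hxy : x = y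
  · subst hxy
    have h0 : gdist R G δ x x ≤ 0 := by
      simpa [walkDelta_nil] using gdist_le_walkDelta hpos hRG (Walk.nil : G.Walk x x)
    exact h0.trans (oplus_nonneg hpos _ _)
  · have hsum : gdist R G δ x y ≤ gdist R G δ x z + gdist R G δ z y := by
      by_contra h'
      push_neg at h'
      have hεpos : 0 < (gdist R G δ x y - (gdist R G δ x z + gdist R G δ z y)) / 2 := by
        linarith
      obtain ⟨t₁, ht₁, hlt₁⟩ := Real.lt_sInf_add_pos (gdist_set_nonempty hpc x z) hεpos
      obtain ⟨t₂, ht₂, hlt₂⟩ := Real.lt_sInf_add_pos (gdist_set_nonempty hpc z y) hεpos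
      obtain ⟨w₁, rfl⟩ := ht₁
      obtain ⟨w₂, rfl⟩ := ht₂
      have hg1 : walkDelta R δ w₁ <
          gdist R G δ x z + (gdist R G δ x y - (gdist R G δ x z + gdist R G δ z y)) / 2 := hlt₁
      have hg2 : walkDelta R δ w₂ <
          gdist R G δ z y + (gdist R G δ x y - (gdist R G δ x z + gdist R G δ z y)) / 2 := hlt₂
      have h1 := gdist_le_walkDelta hpos hRG (w₁.append w₂)
      have h2 := walkDelta_append_le hcl hpos h4 hRG w₁ w₂
      linarith
    exact le_oplus (gdist_mem hcl hpos hRG hpc hxy) hsum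

lemma oplus_oplusList_cons_le (hpos : ∀ x ∈ R, 0 ≤ x) {a : ℝ} (ha : a ∈ R) (l : List ℝ) :
    oplus R a (oplusList R l) ≤ oplusList R (a :: l) := by
  cases l with
  | nil =>
      show oplus R a (0 : ℝ) ≤ a
      exact Real.sSup_le (fun x hx => by linarith [hx.2]) (hpos a ha)
  | cons b t => exact le_refl _

end Walks

/-- Adding to a connected, metric, regular `R`-graph `G` a new edge `{a,b}` with
distance `d^G(a,b)` yields a metric regular `R`-graph `H` with `d^H = d^G`. -/
theorem add_edge_metric_regular (R : Set ℝ) (hne : R.Nonempty)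
    (hcl : IsClosed R) (hpos : ∀ x ∈ R, 0 ≤ x) (h4 : FourValues R)
    {V : Type} (G : SimpleGraph V) (δ : V → V → ℝ)
    (hG : IsRGraph R G δ) (hconn : G.Connected)
    (hmet : MetricRGraph R G δ) (hreg : RegularRGraph R G δ)
    (a b : V) (hab : a ≠ b) (hnadj : ¬ G.Adj a b)
    (δH : V → V → ℝ)
    (hδH1 : δH a b = gdist R G δ a b) (hδH2 : δH b a = gdist R G δ a b)
    (hδH3 : ∀ x y : V, ¬((x = a ∧ y = b) ∨ (x = b ∧ y = a)) → δH x y = δ x y) :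
    IsRGraph R (G ⊔ SimpleGraph.fromEdgeSet {s(a, b)}) δH ∧
      MetricRGraph R (G ⊔ SimpleGraph.fromEdgeSet {s(a, b)}) δH ∧
      RegularRGraph R (G ⊔ SimpleGraph.fromEdgeSet {s(a, b)}) δH ∧
      ∀ x y : V, x ≠ y →
        gdist R (G ⊔ SimpleGraph.fromEdgeSet {s(a, b)}) δH x y = gdist R G δ x y := by
  set H := G ⊔ SimpleGraph.fromEdgeSet {s(a, b)} with hH
  have hGle : G ≤ H := le_sup_left
  have hpc : G.Preconnected := hconn.preconnected
  have hpcH : H.Preconnected := (hconn.mono hGle).preconnected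
  -- adjacency in H
  have hadjH : ∀ x y : V, H.Adj x y ↔ G.Adj x y ∨ ((x = a ∧ y = b) ∨ (x = b ∧ y = a)) := by
    intro x y
    rw [hH, SimpleGraph.sup_adj, SimpleGraph.fromEdgeSet_adj, Set.mem_singleton_iff,
      Sym2.eq_iff]
    constructor
    · rintro (h | ⟨h, _⟩)
      · exact Or.inl h
      · exact Or.inr h
    · rintro (h | h)
      · exact Or.inl h
      · refine Or.inr ⟨h, ?_⟩
        rcases h with ⟨rfl, rfl⟩ | ⟨rfl, rfl⟩
        · exact hab
        · exact hab.symm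
  have hδHG : ∀ x y : V, G.Adj x y → δH x y = δ x y := by
    intro x y h
    refine hδH3 x y ?_
    rintro (⟨rfl, rfl⟩ | ⟨rfl, rfl⟩)
    · exact hnadj h
    · exact hnadj h.symm
  have hdR : gdist R G δ a b ∈ R := gdist_mem hcl hpos hG hpc hab
  have hdpos : 0 < gdist R G δ a b := hreg a b hab
  have hgsymm : gdist R G δ b a = gdist R G δ a b := (gdist_symm hcl hpos h4 hG b a)
  -- H is an R-graph
  have hRGH : IsRGraph R H δH := by
    intro x y hxy
    rcases (hadjH x y).mp hxy with h | ⟨rfl, rfl⟩ | ⟨rfl, rfl⟩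
    · rw [hδHG _ _ h, hδHG _ _ h.symm]
      exact hG x y h
    · rw [hδH1, hδH2]
      exact ⟨hdR, hdpos, rfl⟩
    · rw [hδH1, hδH2]
      exact ⟨hdR, hdpos, rfl⟩
  -- lifting G-walks to H-walks
  have exists_lift : ∀ {x y : V} (w : G.Walk x y), ∃ w' : H.Walk x y,
      (w'.darts.map fun d => δH d.toProd.1 d.toProd.2)
        = (w.darts.map fun d => δ d.toProd.1 d.toProd.2) := by
    intro x y w
    induction w with
    | nil => exact ⟨SimpleGraph.Walk.nil, rfl⟩
    | cons h p ih =>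
        obtain ⟨w', hw'⟩ := ih
        exact ⟨SimpleGraph.Walk.cons (hGle h) w', by
          simp only [SimpleGraph.Walk.darts_cons, List.map_cons, hw', hδHG _ _ h]⟩
  -- upper bound : gdist_H ≤ gdist_G
  have hupper : ∀ x y : V, gdist R H δH x y ≤ gdist R G δ x y := by
    intro x y
    refine csInf_le_csInf (gdist_bddBelow hpos hRGH x y) (gdist_set_nonempty hpc x y) ?_
    rintro t ⟨w, rfl⟩
    obtain ⟨w', hw'⟩ := exists_lift w
    exact ⟨w', by unfold walkDelta; rw [hw']⟩
  -- lower bound : every H-walk has delta at least gdist_G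
  have hlower : ∀ {x y : V} (w : H.Walk x y), gdist R G δ x y ≤ walkDelta R δH w := by
    intro x y w
    induction w with
    | @nil u =>
        simpa [walkDelta_nil] using
          gdist_le_walkDelta hpos hG (SimpleGraph.Walk.nil : G.Walk u u)
    | @cons u v z h p ih =>
        have hA : gdist R G δ u v ≤ δH u v := by
          rcases (hadjH u v).mp h with h' | ⟨rfl, rfl⟩ | ⟨rfl, rfl⟩
          · rw [hδHG _ _ h']
            exact le_of_eq (hmet _ _ h').symm
          · rw [hδH1]
          · rw [hδH2, hgsymm]
        have hδHin : δH u v ∈ R := (hRGH _ _ h).1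
        calc gdist R G δ u z
            ≤ oplus R (gdist R G δ u v) (gdist R G δ v z) :=
              gdist_triangle hcl hpos h4 hG hpc u v z
          _ ≤ oplus R (δH u v) (walkDelta R δH p) := oplus_mono hpos (add_le_add hA ih)
          _ ≤ oplusList R (δH u v :: p.darts.map fun d => δH d.toProd.1 d.toProd.2) :=
              oplus_oplusList_cons_le hpos hδHin _
          _ = walkDelta R δH (SimpleGraph.Walk.cons h p) := rfl
  have heq : ∀ x y : V, gdist R H δH x y = gdist R G δ x y := by
    intro x y
    refine le_antisymm (hupper x y) ?_
    refine le_csInf (gdist_set_nonempty hpcH x y) ?_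
    rintro t ⟨w, rfl⟩
    exact hlower w
  refine ⟨hRGH, ?_, ?_, fun x y _ => heq x y⟩
  · intro x y hxy
    rw [heq x y]
    rcases (hadjH x y).mp hxy with h | ⟨rfl, rfl⟩ | ⟨rfl, rfl⟩
    · rw [hδHG _ _ h]
      exact hmet _ _ h
    · exact hδH1
    · rw [hδH2, hgsymm]
  · intro x y hxy
    rw [heq x y]
    exact hreg x y hxy
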